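/- Let d ≥ 1, let X be a compact metric space, let f : X → X be a homeomorphism, and let A be a continuous linear cocycle over f. Let S ⊆ X satisfy f(S) = S, and let P : S → (ℝ^d →L[ℝ] ℝ^d) satisfy P(x) ∘ P(x) = P(x) and A(x) ∘ P(x) = P(f x) ∘ A(x) for all x ∈ S; write E(x) = range P(x) and F(x) = ker P(x), and assume E(x) ≠ 0 and F(x) ≠ 0 for all x ∈ S. Suppose there exist an integer m ≥ 1 and λ ∈ (0,1) such that ‖A^m(x)|E(x)‖ · ‖A^{-m}(f^m x)|F(f^m x)‖ ≤ λ for every x ∈ S. Then sup_{x ∈ S} ‖P(x)‖ < ∞. -/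

import Mathlib

open Filter Topology MeasureTheory

noncomputable section

variable {X : Type*}

/-- Positive iterates of a linear cocycle: `cpow f A n x = A(f^{n-1}x) ∘ ⋯ ∘ A(x)`. -/
def cpow {d : ℕ} (f : X → X)
    (A : X → (EuclideanSpace ℝ (Fin d) →L[ℝ] EuclideanSpace ℝ (Fin d))) :
    ℕ → X → (EuclideanSpace ℝ (Fin d) →L[ℝ] EuclideanSpace ℝ (Fin d))
  | 0, _ => 1
  | n + 1, x => cpow f A n (f x) ∘L A x

/-- Iterates of the cocycle over `ℤ`, with `A^{-n}(x) = (A^n(f^{-n}x))⁻¹`. -/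
def cIter {d : ℕ} [TopologicalSpace X] (f : X ≃ₜ X)
    (A : X → (EuclideanSpace ℝ (Fin d) →L[ℝ] EuclideanSpace ℝ (Fin d)))
    (n : ℤ) (x : X) : EuclideanSpace ℝ (Fin d) →L[ℝ] EuclideanSpace ℝ (Fin d) :=
  if 0 ≤ n then cpow f A n.toNat x
  else Ring.inverse (cpow f A (-n).toNat ((f.symm : X → X)^[(-n).toNat] x))

/-- Operator norm of the restriction of `T` to the subspace `E`, i.e. `‖T|E‖`. -/
def subNorm {d : ℕ} (T : EuclideanSpace ℝ (Fin d) →L[ℝ] EuclideanSpace ℝ (Fin d))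
    (E : Submodule ℝ (EuclideanSpace ℝ (Fin d))) : ℝ :=
  ‖T ∘L E.subtypeL‖

/-!
Write `w = e + g` with `e = P x w ∈ E(x)`, `g ∈ F(x)`, and let `T = A^m(x)`, so that
`T g ∈ F(f^m x)`. With `a = ‖T|E(x)‖` and `b = ‖T⁻¹|F(f^m x)‖`,
`‖g‖ ≤ b ‖T g‖ ≤ b (‖T w‖ + ‖T e‖) ≤ b ‖T‖ ‖w‖ + a b ‖e‖`, and `‖e‖ ≤ ‖w‖ + ‖g‖`; since `a b ≤ λ < 1`
this gives `(1 - λ) ‖e‖ ≤ (1 + ‖T⁻¹‖ ‖T‖) ‖w‖`. The factor `‖T⁻¹‖ ‖T‖` is bounded uniformly in `x`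
because `x ↦ A^m(x)` is a continuous unit-valued map on a compact space.
-/

open Set

section Domination

variable {𝕜 V W : Type*} [NontriviallyNormedField 𝕜] [NormedAddCommGroup V] [NormedSpace 𝕜 V]
  [NormedAddCommGroup W] [NormedSpace 𝕜 W]

theorem one_sub_mul_norm_le_mul_norm_add (T : V →L[𝕜] W) {e g : V} {a b lam : ℝ} (hb : 0 ≤ b)
    (he : ‖T e‖ ≤ a * ‖e‖) (hg : ‖g‖ ≤ b * ‖T g‖) (hab : a * b ≤ lam) :
    (1 - lam) * ‖e‖ ≤ (1 + b * ‖T‖) * ‖e + g‖ := by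
  have hTg : ‖T g‖ ≤ ‖T‖ * ‖e + g‖ + a * ‖e‖ := calc
    ‖T g‖ = ‖T (e + g) - T e‖ := by rw [map_add, add_sub_cancel_left]
    _ ≤ ‖T (e + g)‖ + ‖T e‖ := norm_sub_le _ _
    _ ≤ ‖T‖ * ‖e + g‖ + a * ‖e‖ := add_le_add (T.le_opNorm _) he
  have hab' : a * b * ‖e‖ ≤ lam * ‖e‖ := mul_le_mul_of_nonneg_right hab (norm_nonneg e)
  have htri : ‖e‖ ≤ ‖e + g‖ + ‖g‖ := by simpa using norm_sub_le (e + g) g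
  linarith [mul_le_mul_of_nonneg_left hTg hb]

theorem norm_projection_le_of_dominated {p : V →L[𝕜] V} (hp : p ∘L p = p) (T : V →L[𝕜] W)
    {a b lam : ℝ} (hb : 0 ≤ b) (hlam : lam < 1) (hE : ∀ v, ‖T (p v)‖ ≤ a * ‖p v‖)
    (hF : ∀ v, p v = 0 → ‖v‖ ≤ b * ‖T v‖) (hab : a * b ≤ lam) :
    ‖p‖ ≤ (1 + b * ‖T‖) / (1 - lam) := by
  refine p.opNorm_le_bound (div_nonneg (by positivity) (by linarith)) fun w => ?_
  have hker : p (w - p w) = 0 := by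
    rw [map_sub, ← p.comp_apply, hp, sub_self]
  have key := one_sub_mul_norm_le_mul_norm_add T hb (hE w) (hF _ hker) hab
  rw [add_sub_cancel] at key
  rw [div_mul_eq_mul_div, le_div_iff₀ (by linarith)]
  linarith

end Domination

theorem Continuous.ringInverse_of_isUnit {R Y : Type*} [NormedRing R] [HasSummableGeomSeries R]
    [TopologicalSpace Y] {g : Y → R} (hg : Continuous g) (hu : ∀ y, IsUnit (g y)) :
    Continuous fun y => Ring.inverse (g y) :=
  continuous_iff_continuousAt.2 fun y =>
    ((hu y).unit_spec ▸ NormedRing.inverse_continuousAt (hu y).unit).comp hg.continuousAt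

section Cocycle

variable {d : ℕ} {f : X → X} {A : X → (EuclideanSpace ℝ (Fin d) →L[ℝ] EuclideanSpace ℝ (Fin d))}

theorem continuous_cpow [TopologicalSpace X] (hf : Continuous f) (hA : Continuous A) (n : ℕ) :
    Continuous (cpow f A n) := by
  induction n with
  | zero => exact continuous_const
  | succ n ih => exact (ih.comp hf).clm_comp hA

theorem isUnit_cpow (hA : ∀ x, IsUnit (A x)) (n : ℕ) (x : X) : IsUnit (cpow f A n x) := by
  induction n generalizing x with
  | zero => exact isUnit_one
  | succ n ih => exact (ih (f x)).mul (hA x)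

theorem cpow_comp_of_mapsTo {S : Set X} (hS : MapsTo f S S)
    {P : X → (EuclideanSpace ℝ (Fin d) →L[ℝ] EuclideanSpace ℝ (Fin d))}
    (hP : ∀ x ∈ S, A x ∘L P x = P (f x) ∘L A x) (n : ℕ) {x : X} (hx : x ∈ S) :
    cpow f A n x ∘L P x = P (f^[n] x) ∘L cpow f A n x := by
  induction n generalizing x with
  | zero => rfl
  | succ n ih =>
    rw [cpow, ContinuousLinearMap.comp_assoc, hP x hx, ← ContinuousLinearMap.comp_assoc,
      ih (hS hx), ContinuousLinearMap.comp_assoc, Function.iterate_succ_apply]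

theorem exists_norm_inverse_cpow_mul_norm_cpow_le [TopologicalSpace X] [CompactSpace X]
    (hf : Continuous f) (hA : Continuous A) (hAu : ∀ x, IsUnit (A x)) (n : ℕ) :
    ∃ C, ∀ x, ‖Ring.inverse (cpow f A n x)‖ * ‖cpow f A n x‖ ≤ C := by
  have hc := continuous_cpow hf hA n
  obtain ⟨C, hC⟩ := (isCompact_range
    ((hc.ringInverse_of_isUnit (isUnit_cpow hAu n)).norm.mul hc.norm)).bddAbove
  exact ⟨C, fun x => hC ⟨x, rfl⟩⟩

theorem cIter_natCast [TopologicalSpace X] (f : X ≃ₜ X) (n : ℕ) (x : X) :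
    cIter f A n x = cpow f A n x := by
  simp [cIter]

theorem cIter_neg_natCast_iterate [TopologicalSpace X] (f : X ≃ₜ X) (n : ℕ) (x : X) :
    cIter f A (-n) (f^[n] x) = Ring.inverse (cpow f A n x) := by
  rcases n with _ | n
  · simp [cIter, cpow]
  · rw [cIter, if_neg (by omega), neg_neg, Int.toNat_natCast,
      (Function.LeftInverse.iterate f.symm_apply_apply _) x]

end Cocycle

section SubNorm

variable {d : ℕ} (T : EuclideanSpace ℝ (Fin d) →L[ℝ] EuclideanSpace ℝ (Fin d))
  (E : Submodule ℝ (EuclideanSpace ℝ (Fin d)))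

theorem subNorm_nonneg : 0 ≤ subNorm T E := norm_nonneg (T ∘L E.subtypeL)

theorem subNorm_le_norm : subNorm T E ≤ ‖T‖ :=
  (T.opNorm_comp_le _).trans (mul_le_of_le_one_right (norm_nonneg T) E.norm_subtypeL_le)

theorem norm_apply_le_subNorm {u : EuclideanSpace ℝ (Fin d)} (hu : u ∈ E) :
    ‖T u‖ ≤ subNorm T E * ‖u‖ :=
  (T ∘L E.subtypeL).le_opNorm ⟨u, hu⟩

theorem norm_le_subNorm_inverse_mul {T} (hT : IsUnit T) {v : EuclideanSpace ℝ (Fin d)}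
    (hv : T v ∈ E) : ‖v‖ ≤ subNorm (Ring.inverse T) E * ‖T v‖ := calc
  ‖v‖ = ‖Ring.inverse T (T v)‖ := by
    rw [← ContinuousLinearMap.comp_apply, ← ContinuousLinearMap.mul_def,
      Ring.inverse_mul_cancel _ hT]
    rfl
  _ ≤ subNorm (Ring.inverse T) E * ‖T v‖ := norm_apply_le_subNorm _ _ hv

end SubNorm

theorem dominated_splitting_bounded_projections_general {d : ℕ}
    [MetricSpace X] [CompactSpace X] (f : X ≃ₜ X)
    (A : X → (EuclideanSpace ℝ (Fin d) →L[ℝ] EuclideanSpace ℝ (Fin d)))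
    (hAcont : Continuous A) (hAinv : ∀ x, IsUnit (A x))
    (S : Set X) (hS : (f : X → X) '' S = S)
    (P : X → (EuclideanSpace ℝ (Fin d) →L[ℝ] EuclideanSpace ℝ (Fin d)))
    (hPproj : ∀ x ∈ S, P x ∘L P x = P x)
    (hPinv : ∀ x ∈ S, A x ∘L P x = P (f x) ∘L A x)
    (m : ℕ) (lam : ℝ) (hlam : lam ∈ Set.Ioo (0 : ℝ) 1)
    (hdom : ∀ x ∈ S,
      subNorm (cIter f A (m : ℤ) x) (LinearMap.range (P x : EuclideanSpace ℝ (Fin d) →ₗ[ℝ] EuclideanSpace ℝ (Fin d))) *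
        subNorm (cIter f A (-(m : ℤ)) ((f : X → X)^[m] x))
          (LinearMap.ker (P ((f : X → X)^[m] x) : EuclideanSpace ℝ (Fin d) →ₗ[ℝ] EuclideanSpace ℝ (Fin d))) ≤ lam) :
    ∃ C : ℝ, ∀ x ∈ S, ‖P x‖ ≤ C := by
  obtain ⟨C, hC⟩ := exists_norm_inverse_cpow_mul_norm_cpow_le f.continuous hAcont hAinv m
  have hSf : MapsTo f S S := (mapsTo_image f S).mono_right hS.subset
  refine ⟨(1 + C) / (1 - lam), fun x hx => ?_⟩
  have hab := hdom x hx
  rw [cIter_natCast, cIter_neg_natCast_iterate] at hab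
  have hTker : ∀ v, P x v = 0 → cpow f A m x v ∈ LinearMap.ker (P ((f : X → X)^[m] x) :
      EuclideanSpace ℝ (Fin d) →ₗ[ℝ] EuclideanSpace ℝ (Fin d)) := fun v hv => by
    rw [LinearMap.mem_ker, ContinuousLinearMap.coe_coe, ← ContinuousLinearMap.comp_apply,
      ← cpow_comp_of_mapsTo hSf hPinv m hx, ContinuousLinearMap.comp_apply, hv, map_zero]
  refine (norm_projection_le_of_dominated (hPproj x hx) _ (subNorm_nonneg _ _) hlam.2
    (fun v => norm_apply_le_subNorm _ _ (LinearMap.mem_range_self _ v))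
    (fun v hv => norm_le_subNorm_inverse_mul _ (isUnit_cpow hAinv m x) (hTker v hv))
    hab).trans ?_
  gcongr
  · linarith [hlam.2]
  · exact (mul_le_mul_of_nonneg_right (subNorm_le_norm _ _) (norm_nonneg _)).trans (hC x)

/-- Uniformly bounded angles along a dominated splitting ([2, Lemma II.9]): the
projections onto `E` along `F` are uniformly bounded in norm over the invariant set. -/
theorem dominated_splitting_bounded_projections {d : ℕ} (hd : 1 ≤ d)
    [MetricSpace X] [CompactSpace X] (f : X ≃ₜ X)
    (A : X → (EuclideanSpace ℝ (Fin d) →L[ℝ] EuclideanSpace ℝ (Fin d)))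
    (hAcont : Continuous A) (hAinv : ∀ x, IsUnit (A x))
    (S : Set X) (hS : (f : X → X) '' S = S)
    (P : X → (EuclideanSpace ℝ (Fin d) →L[ℝ] EuclideanSpace ℝ (Fin d)))
    (hPproj : ∀ x ∈ S, P x ∘L P x = P x)
    (hPinv : ∀ x ∈ S, A x ∘L P x = P (f x) ∘L A x)
    (hE : ∀ x ∈ S, LinearMap.range (P x : EuclideanSpace ℝ (Fin d) →ₗ[ℝ] EuclideanSpace ℝ (Fin d)) ≠ ⊥)
    (hF : ∀ x ∈ S, LinearMap.ker (P x : EuclideanSpace ℝ (Fin d) →ₗ[ℝ] EuclideanSpace ℝ (Fin d)) ≠ ⊥)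
    (m : ℕ) (hm : 1 ≤ m) (lam : ℝ) (hlam : lam ∈ Set.Ioo (0 : ℝ) 1)
    (hdom : ∀ x ∈ S,
      subNorm (cIter f A (m : ℤ) x) (LinearMap.range (P x : EuclideanSpace ℝ (Fin d) →ₗ[ℝ] EuclideanSpace ℝ (Fin d))) *
        subNorm (cIter f A (-(m : ℤ)) ((f : X → X)^[m] x))
          (LinearMap.ker (P ((f : X → X)^[m] x) : EuclideanSpace ℝ (Fin d) →ₗ[ℝ] EuclideanSpace ℝ (Fin d))) ≤ lam) :
    ∃ C : ℝ, ∀ x ∈ S, ‖P x‖ ≤ C :=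
  dominated_splitting_bounded_projections_general f A hAcont hAinv S hS P hPproj hPinv m lam hlam
    hdom
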